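/- arXiv:0907.2870 — 2 statements merged into one kernel-verified Lean document; each statement's English description precedes it below -/
import Mathlib

section
/- For nonnegative integers k ≤ n, the q-binomial coefficient factorizes as [n choose k]_q = ∏_d Φ_d(q), where the product ranges over all positive integers d ≤ n such that ⌊k/d⌋ + ⌊(n-k)/d⌋ < ⌊n/d⌋, and Φ_d denotes the d-th cyclotomic polynomial. -/
open Polynomial

/-- The `q`-integer `[n]_q = 1 + q + ⋯ + q^{n-1}` as a polynomial in `ℤ[q]`. -/
noncomputable def qInt (n : ℕ) : Polynomial ℤ := ∑ i ∈ Finset.range n, X ^ i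

/-- The `q`-factorial `[n]_q! = ∏_{k=1}^n [k]_q`. -/
noncomputable def qFact (n : ℕ) : Polynomial ℤ := ∏ k ∈ Finset.range n, qInt (k + 1)

/-! Since `[m]_q = (q^m - 1)/(q - 1) = ∏_{d ∣ m, d > 1} Φ_d`, the `q`-factorial is
`[m]_q! = ∏_{1 < d} Φ_d ^ ⌊m/d⌋`. The exponent of `Φ_d` in `[n]_q! / ([k]_q! [n-k]_q!)` is then
`⌊n/d⌋ - ⌊k/d⌋ - ⌊(n-k)/d⌋`, which is `0` or `1`; and `B` is determined by `hB` because `ℤ[q]` is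
a domain and `q`-factorials are nonzero. -/

lemma qInt_eq_prod_cyclotomic_pow {m n : ℕ} (hm : 0 < m) (hmn : m ≤ n) :
    qInt m = ∏ d ∈ Finset.Ioc 1 n, cyclotomic d ℤ ^ (if d ∣ m then 1 else 0) := by
  have hdiv : m.divisors.erase 1 = (Finset.Ioc 1 n).filter (· ∣ m) := by
    ext d
    simp only [Finset.mem_erase, Nat.mem_divisors, Finset.mem_filter, Finset.mem_Ioc]
    constructor
    · rintro ⟨hd1, hdm, -⟩
      have := Nat.le_of_dvd hm hdm
      have := Nat.pos_of_dvd_of_pos hdm hm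
      exact ⟨⟨by omega, by omega⟩, hdm⟩
    · rintro ⟨⟨hd1, -⟩, hdm⟩
      exact ⟨by omega, hdm, hm.ne'⟩
  simp only [pow_ite, pow_one, pow_zero]
  rw [← Finset.prod_filter, ← hdiv, qInt, prod_cyclotomic_eq_geom_sum hm]

lemma qFact_eq_prod_cyclotomic_pow {m n : ℕ} (hmn : m ≤ n) :
    qFact m = ∏ d ∈ Finset.Ioc 1 n, cyclotomic d ℤ ^ (m / d) := by
  induction m with
  | zero => simp [qFact]
  | succ m ih =>
    rw [qFact, Finset.prod_range_succ, ← qFact, ih (by omega),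
      qInt_eq_prod_cyclotomic_pow m.succ_pos hmn, ← Finset.prod_mul_distrib]
    simp only [← pow_add, Nat.succ_div]

lemma qFact_ne_zero (n : ℕ) : qFact n ≠ 0 := by
  rw [qFact_eq_prod_cyclotomic_pow le_rfl]
  exact Finset.prod_ne_zero_iff.2 fun d _ => pow_ne_zero _ (cyclotomic_ne_zero d ℤ)

lemma Nat.add_div_eq_div_add_div_add_ite (a b d : ℕ) :
    (a + b) / d = a / d + b / d + if a / d + b / d < (a + b) / d then 1 else 0 := by
  have := Nat.div_add_div_le_add_div (x := a) (y := b) (z := d)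
  have := Nat.add_div_le_div_add_div_add_one a b d
  split_ifs <;> omega

lemma qFact_mul_qFact_mul_prod_cyclotomic {n k : ℕ} (hk : k ≤ n) :
    qFact k * qFact (n - k) *
      ∏ d ∈ (Finset.Icc 1 n).filter (fun d => k / d + (n - k) / d < n / d), cyclotomic d ℤ =
      qFact n := by
  rcases Nat.eq_zero_or_pos n with rfl | hn
  · obtain rfl : k = 0 := by omega
    simp [qFact]
  rw [Finset.Icc_eq_cons_Ioc hn, Finset.filter_cons_of_neg _ _ _ _ (by simp; omega),
    qFact_eq_prod_cyclotomic_pow hk, qFact_eq_prod_cyclotomic_pow (Nat.sub_le n k),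
    qFact_eq_prod_cyclotomic_pow le_rfl, Finset.prod_filter, ← Finset.prod_mul_distrib,
    ← Finset.prod_mul_distrib]
  refine Finset.prod_congr rfl fun d _ => ?_
  conv_rhs =>
    rw [← Nat.add_sub_cancel' hk, Nat.add_div_eq_div_add_div_add_ite, Nat.add_sub_cancel' hk]
  split_ifs <;> simp [pow_add]

/-- The `q`-binomial coefficient `[n choose k]_q = [n]_q!/([k]_q! [n-k]_q!)` factorizes as the
product of the cyclotomic polynomials `Φ_d(q)` over all positive integers `d ≤ n` with
`⌊k/d⌋ + ⌊(n-k)/d⌋ < ⌊n/d⌋`. -/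
theorem qbinom_eq_prod_cyclotomic (n k : ℕ) (hk : k ≤ n) (B : Polynomial ℤ)
    (hB : B * (qFact k * qFact (n - k)) = qFact n) :
    B = ∏ d ∈ (Finset.Icc 1 n).filter (fun d => k / d + (n - k) / d < n / d),
      cyclotomic d ℤ := by
  apply mul_right_cancel₀ (mul_ne_zero (qFact_ne_zero k) (qFact_ne_zero (n - k)))
  rw [hB, mul_comm, qFact_mul_qFact_mul_prod_cyclotomic hk]
end

section
/- For any positive integer n, the least common multiple of the binomial coefficients C(n,0), C(n,1), ..., C(n,n) equals ∏_p p^{e_p}, the product over all primes p ≤ n, where e_p is the number of positive integers r such that p^r ≤ n and p^r does not divide n+1. -/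
/-!
Compare `p`-adic valuations. By Kummer's theorem, `v_p (C(n, k))` is the number of `i ≥ 1` with
`n % p^i < k % p^i`, i.e. of borrows when subtracting `k` from `n` in base `p`. Such an `i` has
`p^i ≤ n` and `n % p^i ≠ p^i - 1`, i.e. `p^i ∤ n + 1`. Conversely `k = p^⌊log_p n⌋ - 1` satisfies
`k % p^i = p^i - 1` whenever `p^i ≤ n`, so it borrows at every such `i`.
-/

open Finset Nat

namespace Nat

theorem prod_pow_factorization_eq_self_of_primeFactors_subset {m : ℕ} {s : Finset ℕ} (hm : m ≠ 0)
    (hs : m.primeFactors ⊆ s) : ∏ p ∈ s, p ^ m.factorization p = m := by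
  conv_rhs => rw [prod_primeFactors_pow_factorization hm]
  refine (prod_subset hs fun p _ hp => ?_).symm
  rw [Finsupp.notMem_support_iff.mp (by rwa [support_factorization]), pow_zero]

theorem mod_eq_sub_one_iff_dvd_add_one {m n : ℕ} (hm : 0 < m) : n % m = m - 1 ↔ m ∣ n + 1 := by
  constructor
  · intro h
    refine ⟨n / m + 1, ?_⟩
    have := Nat.div_add_mod n m
    rw [mul_add, mul_one]
    generalize m * (n / m) = q at *
    omega
  · rintro ⟨_ | t, ht⟩
    · omega
    · have hn : n = m * t + (m - 1) := by rw [mul_add, mul_one] at ht; omega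
      rw [hn, Nat.mul_add_mod, Nat.mod_eq_of_lt (by omega)]

theorem le_mod_add_mod_iff_add_mod_lt {a b c : ℕ} (hc : 0 < c) :
    c ≤ a % c + b % c ↔ (a + b) % c < a % c := by
  have hsum := add_mod_add_ite a b c
  have hb := Nat.mod_lt b hc
  split_ifs at hsum <;> omega

theorem le_of_mod_lt_mod {k m n : ℕ} (hkn : k ≤ n) (h : n % m < k % m) : m ≤ n := by
  by_contra! hnm
  have := Nat.mod_le k m
  rw [Nat.mod_eq_of_lt hnm] at h
  omega

theorem not_dvd_add_one_of_mod_lt_mod {k m n : ℕ} (h : n % m < k % m) : ¬ m ∣ n + 1 := by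
  intro hdvd
  have hm : 0 < m := Nat.pos_of_ne_zero fun h0 => by simp [h0] at hdvd
  have := Nat.mod_lt k hm
  have := (mod_eq_sub_one_iff_dvd_add_one hm).2 hdvd
  omega

theorem pow_log_sub_one_le (b n : ℕ) : b ^ log b n - 1 ≤ n := by
  rcases eq_or_ne n 0 with rfl | hn
  · simp
  · have := pow_log_le_self b hn
    omega

theorem mod_lt_pow_log_sub_one_mod_iff {b n i : ℕ} (hb : 1 < b) :
    n % b ^ i < (b ^ log b n - 1) % b ^ i ↔ b ^ i ≤ n ∧ ¬ b ^ i ∣ n + 1 := by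
  refine ⟨fun h => ⟨le_of_mod_lt_mod (pow_log_sub_one_le b n) h,
    not_dvd_add_one_of_mod_lt_mod h⟩, fun ⟨hle, hndvd⟩ => ?_⟩
  have hm : 0 < b ^ i := pow_pos (by omega) i
  have hdvd : b ^ i ∣ b ^ log b n - 1 + 1 := by
    rw [Nat.sub_add_cancel (one_le_pow _ _ (by omega))]
    exact pow_dvd_pow b (le_log_of_pow_le hb hle)
  rw [(mod_eq_sub_one_iff_dvd_add_one hm).2 hdvd]
  have := Nat.mod_lt n hm
  have := (mod_eq_sub_one_iff_dvd_add_one hm).not.2 hndvd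
  omega

theorem factorization_choose_eq_card_mod_lt_mod {p n k : ℕ} (hp : p.Prime) (hkn : k ≤ n) :
    (choose n k).factorization p = #{i ∈ Icc 1 n | n % p ^ i < k % p ^ i} := by
  rw [factorization_choose hp hkn (b := n + 1) (Nat.lt_succ_of_le (log_le_self p n)),
    Ico_add_one_right_eq_Icc]
  refine congrArg card (filter_congr fun i _ => ?_)
  rw [le_mod_add_mod_iff_add_mod_lt (pow_pos hp.pos i), Nat.add_sub_cancel' hkn]

theorem factorization_choose_le_card {p n k : ℕ} (hp : p.Prime) (hkn : k ≤ n) :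
    (choose n k).factorization p ≤ #{r ∈ Icc 1 n | p ^ r ≤ n ∧ ¬ p ^ r ∣ n + 1} := by
  rw [factorization_choose_eq_card_mod_lt_mod hp hkn]
  exact card_le_card (monotone_filter_right _ fun i _ h =>
    ⟨le_of_mod_lt_mod hkn h, not_dvd_add_one_of_mod_lt_mod h⟩)

theorem factorization_choose_pow_log_sub_one {p : ℕ} (hp : p.Prime) (n : ℕ) :
    (choose n (p ^ log p n - 1)).factorization p
      = #{r ∈ Icc 1 n | p ^ r ≤ n ∧ ¬ p ^ r ∣ n + 1} := by
  rw [factorization_choose_eq_card_mod_lt_mod hp (pow_log_sub_one_le p n)]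
  exact congrArg card (filter_congr fun i _ => mod_lt_pow_log_sub_one_mod_iff hp.one_lt)

theorem lcm_choose_dvd_factorial (n : ℕ) : (range (n + 1)).lcm n.choose ∣ n ! :=
  Finset.lcm_dvd fun k hk => ⟨k ! * (n - k)!, by
    rw [← mul_assoc, choose_mul_factorial_mul_factorial (Nat.lt_succ_iff.1 (mem_range.1 hk))]⟩

theorem factorization_lcm_choose {p : ℕ} (hp : p.Prime) (n : ℕ) :
    ((range (n + 1)).lcm n.choose).factorization p
      = #{r ∈ Icc 1 n | p ^ r ≤ n ∧ ¬ p ^ r ∣ n + 1} := by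
  rw [Finset.factorization_lcm fun k hk => (choose_pos (Nat.lt_succ_iff.1 (mem_range.1 hk))).ne']
  refine le_antisymm (Finset.sup_le fun k hk => factorization_choose_le_card hp
    (Nat.lt_succ_iff.1 (mem_range.1 hk))) ?_
  rw [← factorization_choose_pow_log_sub_one hp n]
  exact le_sup (f := fun k => (n.choose k).factorization p)
    (mem_range.2 (Nat.lt_succ_of_le (pow_log_sub_one_le p n)))

end Nat

theorem lcm_choose_eq_prod_primes_general (n : ℕ) :
    (Finset.range (n + 1)).lcm (n.choose)
      = ∏ p ∈ (Finset.Icc 1 n).filter Nat.Prime,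
          p ^ ((Finset.Icc 1 n).filter (fun r => p ^ r ≤ n ∧ ¬ p ^ r ∣ (n + 1))).card := by
  set L := (range (n + 1)).lcm n.choose
  have hL : L ≠ 0 := (Nat.pos_of_dvd_of_pos (lcm_choose_dvd_factorial n) (factorial_pos n)).ne'
  have hprimes : L.primeFactors ⊆ {p ∈ Icc 1 n | p.Prime} := fun p hp =>
    have hp' := prime_of_mem_primeFactors hp
    mem_filter.2 ⟨mem_Icc.2 ⟨hp'.one_le, hp'.dvd_factorial.1
      ((dvd_of_mem_primeFactors hp).trans (lcm_choose_dvd_factorial n))⟩, hp'⟩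
  rw [← prod_pow_factorization_eq_self_of_primeFactors_subset hL hprimes]
  exact prod_congr rfl fun p hp => by rw [factorization_lcm_choose (mem_filter.1 hp).2]

/-- For a positive integer `n`, `lcm(C(n,0), ..., C(n,n))` equals the product over all
primes `p ≤ n` of `p^{e_p}`, where `e_p` is the number of positive integers `r` with
`p^r ≤ n` and `p^r ∤ n+1`. -/
theorem lcm_choose_eq_prod_primes (n : ℕ) (hn : 0 < n) :
    (Finset.range (n + 1)).lcm (n.choose)
      = ∏ p ∈ (Finset.Icc 1 n).filter Nat.Prime,
          p ^ ((Finset.Icc 1 n).filter (fun r => p ^ r ≤ n ∧ ¬ p ^ r ∣ (n + 1))).card :=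
  lcm_choose_eq_prod_primes_general n
end
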